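/- Define G : ℝ×(−π/2, π/2) → ℝ² by G(x,y) = (x·cos y, tan y). Then G is a smooth diffeomorphism onto ℝ² mapping {0}×(−π/2,π/2) onto {0}×ℝ, and for every smooth φ : ℝ² → ℂ and every (x,y) in the domain: (1/2)·(x·∂_x(φ∘G)(x,y) + i·∂_y(φ∘G)(x,y)) = (Lφ)(G(x,y)), where for q = (X,Y), (Lφ)(q) := (1/2)·(X·∂_Xφ(q) + i·(−X·Y·∂_Xφ(q) + (1+Y²)·∂_Yφ(q))). Moreover the function p(X,Y) := X + i·X·Y satisfies L p = 0 on ℝ². -/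

import Mathlib

/-!
STATEMENT 17.  `G(x,y) = (x·cos y, tan y)` on `ℝ×(−π/2, π/2)` is a smooth diffeomorphism
onto `ℝ²` mapping `{0}×(−π/2,π/2)` onto `{0}×ℝ`, and for every smooth `φ : ℝ² → ℂ`:
`(1/2)(x∂ₓ(φ∘G) + i∂_y(φ∘G)) = (Lφ)∘G`, where
`(Lφ)(X,Y) = (1/2)(X∂_Xφ + i(−XY∂_Xφ + (1+Y²)∂_Yφ))`, i.e. `G_*(ᵇ∂_z̄) = L`.
Moreover `p(X,Y) = X + iXY` satisfies `Lp = 0` on `ℝ²`.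
-/

/-- `G(x,y) = (x·cos y, tan y)`. -/
noncomputable def Gmap : ℝ × ℝ → ℝ × ℝ := fun p => (p.1 * Real.cos p.2, Real.tan p.2)

/-- The domain `ℝ × (−π/2, π/2)`. -/
noncomputable def Sdom : Set (ℝ × ℝ) :=
  Set.univ ×ˢ Set.Ioo (-(Real.pi / 2)) (Real.pi / 2)

/-- The vector field `L = (1/2)(X∂_X + i(−XY∂_X + (1+Y²)∂_Y))` applied to `φ` at `q`. -/
noncomputable def Lvf (φ : ℝ × ℝ → ℂ) (q : ℝ × ℝ) : ℂ :=
  (1 / 2 : ℂ) * ((q.1 : ℂ) * fderiv ℝ φ q ((1, 0) : ℝ × ℝ)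
    + Complex.I * (-(q.1 : ℂ) * (q.2 : ℂ) * fderiv ℝ φ q ((1, 0) : ℝ × ℝ)
      + (1 + (q.2 : ℂ) ^ 2) * fderiv ℝ φ q ((0, 1) : ℝ × ℝ)))

/-!
The inverse of `G` is `(X, Y) ↦ (X √(1 + Y²), arctan Y)`, smooth on all of `ℝ²`. By the chain
rule `G_*(x∂_x) = x cos y ∂_X = X∂_X` and `G_*(∂_y) = -x sin y ∂_X + sec² y ∂_Y`, which is
`-XY∂_X + (1 + Y²)∂_Y` because `x sin y = (x cos y) tan y` and `sec² y = 1 + tan² y`.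
-/

open ContinuousLinearMap

lemma ContinuousLinearMap.apply_pair_eq {R M : Type*} [Semiring R] [TopologicalSpace R]
    [AddCommMonoid M] [TopologicalSpace M] [Module R M] (f : R × R →L[R] M) (a b : R) :
    f (a, b) = a • f (1, 0) + b • f (0, 1) := by
  rw [← map_smul, ← map_smul, ← map_add]
  simp

lemma cos_pos_of_mem_Sdom {p : ℝ × ℝ} (hp : p ∈ Sdom) : 0 < Real.cos p.2 :=
  Real.cos_pos_of_mem_Ioo hp.2

lemma hasFDerivAt_Gmap {p : ℝ × ℝ} (hp : p ∈ Sdom) :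
    HasFDerivAt Gmap
      ((p.1 • (-Real.sin p.2) • snd ℝ ℝ ℝ + Real.cos p.2 • fst ℝ ℝ ℝ).prod
        ((1 / Real.cos p.2 ^ 2) • snd ℝ ℝ ℝ)) p :=
  (hasFDerivAt_fst.mul ((Real.hasDerivAt_cos p.2).comp_hasFDerivAt p hasFDerivAt_snd)).prodMk
    ((Real.hasDerivAt_tan (cos_pos_of_mem_Sdom hp).ne').comp_hasFDerivAt p hasFDerivAt_snd)

lemma smul_fderiv_Gmap_one_zero {p : ℝ × ℝ} (hp : p ∈ Sdom) :
    p.1 • fderiv ℝ Gmap p (1, 0) = ((Gmap p).1, 0) := by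
  simp [(hasFDerivAt_Gmap hp).fderiv, Gmap, mul_comm]

lemma fderiv_Gmap_zero_one {p : ℝ × ℝ} (hp : p ∈ Sdom) :
    fderiv ℝ Gmap p (0, 1) = (-((Gmap p).1 * (Gmap p).2), 1 + (Gmap p).2 ^ 2) := by
  have hc := (cos_pos_of_mem_Sdom hp).ne'
  rw [(hasFDerivAt_Gmap hp).fderiv]
  ext
  · simp [Gmap, ← Real.tan_mul_cos hc, mul_assoc, mul_comm]
  · simp [Gmap, ← Real.inv_one_add_tan_sq hc]

lemma contDiffOn_Gmap {n : WithTop ℕ∞} : ContDiffOn ℝ n Gmap Sdom := fun p hp =>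
  ((contDiffAt_fst.mul (Real.contDiff_cos.contDiffAt.comp p contDiffAt_snd)).prodMk
    ((Real.contDiffAt_tan.2 (cos_pos_of_mem_Sdom hp).ne').comp p contDiffAt_snd)).contDiffWithinAt

noncomputable def Ginv : ℝ × ℝ → ℝ × ℝ :=
  fun q => (q.1 * Real.sqrt (1 + q.2 ^ 2), Real.arctan q.2)

lemma contDiff_Ginv {n : WithTop ℕ∞} : ContDiff ℝ n Ginv :=
  (contDiff_fst.mul ((contDiff_const.add (contDiff_snd.pow 2)).sqrt fun _ => by positivity)).prodMk
    (Real.contDiff_arctan.comp contDiff_snd)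

lemma Ginv_mem_Sdom (q : ℝ × ℝ) : Ginv q ∈ Sdom :=
  ⟨trivial, Real.arctan_mem_Ioo q.2⟩

lemma Gmap_Ginv (q : ℝ × ℝ) : Gmap (Ginv q) = q := by
  have h : Real.sqrt (1 + q.2 ^ 2) ≠ 0 := by positivity
  ext
  · simp only [Gmap, Ginv, Real.cos_arctan]
    field_simp
  · exact Real.tan_arctan q.2

lemma leftInvOn_Ginv_Gmap : Set.LeftInvOn Ginv Gmap Sdom := fun p hp => by
  have hc := cos_pos_of_mem_Sdom hp
  have hs : Real.sqrt (1 + Real.tan p.2 ^ 2) = (Real.cos p.2)⁻¹ := by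
    rw [← Real.inv_sqrt_one_add_tan_sq hc, inv_inv]
  ext
  · simp only [Gmap, Ginv, hs]
    field_simp
  · exact Real.arctan_tan hp.2.1 hp.2.2

lemma image_Gmap_Sdom_inter_fst_eq_zero :
    Gmap '' (Sdom ∩ {p : ℝ × ℝ | p.1 = 0}) = {q : ℝ × ℝ | q.1 = 0} := by
  refine Set.Subset.antisymm ?_ fun q hq => ⟨Ginv q, ⟨Ginv_mem_Sdom q, ?_⟩, Gmap_Ginv q⟩
  · rintro _ ⟨p, ⟨-, hp0 : p.1 = 0⟩, rfl⟩
    simp [Gmap, hp0]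
  · simp [Ginv, hq.out]

/-- `ᵇ∂_z̄ f = (1/2)(x∂_x f + i∂_y f)`. -/
noncomputable def bDzbar (f : ℝ × ℝ → ℂ) (p : ℝ × ℝ) : ℂ :=
  (1 / 2 : ℂ) * ((p.1 : ℂ) * fderiv ℝ f p (1, 0) + Complex.I * fderiv ℝ f p (0, 1))

lemma bDzbar_comp_Gmap {φ : ℝ × ℝ → ℂ} {p : ℝ × ℝ} (hφ : DifferentiableAt ℝ φ (Gmap p))
    (hp : p ∈ Sdom) : bDzbar (φ ∘ Gmap) p = Lvf φ (Gmap p) := by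
  have hG := (hasFDerivAt_Gmap hp).differentiableAt
  have hx : (p.1 : ℂ) * fderiv ℝ (φ ∘ Gmap) p (1, 0) =
      (Gmap p).1 * fderiv ℝ φ (Gmap p) (1, 0) := by
    rw [fderiv_comp p hφ hG, coe_comp, Function.comp_apply, ← Complex.real_smul, ← map_smul,
      smul_fderiv_Gmap_one_zero hp, apply_pair_eq]
    simp [Complex.real_smul]
  have hy : fderiv ℝ (φ ∘ Gmap) p (0, 1) =
      -((Gmap p).1 * (Gmap p).2 : ℂ) * fderiv ℝ φ (Gmap p) (1, 0)
        + (1 + ((Gmap p).2 : ℂ) ^ 2) * fderiv ℝ φ (Gmap p) (0, 1) := by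
    rw [fderiv_comp p hφ hG, coe_comp, Function.comp_apply, fderiv_Gmap_zero_one hp,
      apply_pair_eq]
    simp [Complex.real_smul]
  rw [bDzbar, Lvf, hx, hy]
  ring

lemma Lvf_X_add_I_mul_XY (q : ℝ × ℝ) :
    Lvf (fun w : ℝ × ℝ => (w.1 : ℂ) + Complex.I * ((w.1 : ℂ) * (w.2 : ℂ))) q = 0 := by
  have hX : HasFDerivAt (fun w : ℝ × ℝ => (w.1 : ℂ)) (Complex.ofRealCLM.comp (fst ℝ ℝ ℝ)) q :=
    Complex.ofRealCLM.hasFDerivAt.comp q hasFDerivAt_fst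
  have hY : HasFDerivAt (fun w : ℝ × ℝ => (w.2 : ℂ)) (Complex.ofRealCLM.comp (snd ℝ ℝ ℝ)) q :=
    Complex.ofRealCLM.hasFDerivAt.comp q hasFDerivAt_snd
  have hp : HasFDerivAt (fun w : ℝ × ℝ => (w.1 : ℂ) + Complex.I * ((w.1 : ℂ) * (w.2 : ℂ))) _ q :=
    hX.add ((hX.mul hY).const_mul Complex.I)
  rw [Lvf, hp.fderiv]
  simp only [add_apply, smul_apply, comp_apply, coe_fst', coe_snd', Complex.ofRealCLM_apply,
    smul_eq_mul]
  push_cast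
  linear_combination (q.1 : ℂ) / 2 * Complex.I_sq

theorem stmt_17 :
    ContDiffOn ℝ (⊤ : ℕ∞) Gmap Sdom ∧ Set.InjOn Gmap Sdom ∧
    Gmap '' Sdom = Set.univ ∧
    (∃ Ginv : ℝ × ℝ → ℝ × ℝ, ContDiff ℝ (⊤ : ℕ∞) Ginv ∧
      (∀ p ∈ Sdom, Ginv (Gmap p) = p) ∧ (∀ q : ℝ × ℝ, Gmap (Ginv q) = q)) ∧
    Gmap '' (Sdom ∩ {p : ℝ × ℝ | p.1 = 0}) = {q : ℝ × ℝ | q.1 = 0} ∧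
    (∀ φ : ℝ × ℝ → ℂ, ContDiff ℝ (⊤ : ℕ∞) φ → ∀ p ∈ Sdom,
      (1 / 2 : ℂ) * ((p.1 : ℂ) * fderiv ℝ (φ ∘ Gmap) p ((1, 0) : ℝ × ℝ)
          + Complex.I * fderiv ℝ (φ ∘ Gmap) p ((0, 1) : ℝ × ℝ))
        = Lvf φ (Gmap p)) ∧
    (∀ q : ℝ × ℝ, Lvf (fun w : ℝ × ℝ => (w.1 : ℂ) + Complex.I * ((w.1 : ℂ) * (w.2 : ℂ))) q = 0) :=
  ⟨contDiffOn_Gmap, leftInvOn_Ginv_Gmap.injOn,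
    Set.eq_univ_of_forall fun q => ⟨Ginv q, Ginv_mem_Sdom q, Gmap_Ginv q⟩,
    ⟨Ginv, contDiff_Ginv, leftInvOn_Ginv_Gmap, Gmap_Ginv⟩,
    image_Gmap_Sdom_inter_fst_eq_zero,
    fun _ hφ _ hp => bDzbar_comp_Gmap (hφ.differentiable (by simp)).differentiableAt hp,
    Lvf_X_add_I_mul_XY⟩
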